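/- arXiv:2504.15799 — 5 statements merged into one kernel-verified Lean document; each statement's English description precedes it below -/
import Mathlib

section
/- Let 2 ≤ p ≤ q be real exponents, K ≥ 1 and δ > 0. Let a_z, b_z, a_w, b_w ≥ 0 and λ_z, λ_w ≥ 1 be real numbers satisfying: λ_z ≤ λ_w; a_w ≥ δ/2; |a_z − a_w| ≤ K·δ/10; |b_z − b_w|·λ_z^q ≤ (K·δ/20)·λ_z^p; and a_z·λ_z^p + b_z·λ_z^q + 1 = a_w·λ_w^p + b_w·λ_w^q + 1. Then λ_w^p ≤ 2K·λ_z^p, i.e. λ_w ≤ (2K)^{1/p}·λ_z. -/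
/-- Comparability of intrinsic scaling factors, Case (1-1): both centers in the
p-intrinsic phase (the coefficient `a` is bounded below by `δ/2` at `𝔴`). -/
theorem scaling_comparable_case_11 (p q K δ : ℝ)
    (hp : 2 ≤ p) (hpq : p ≤ q) (hK : 1 ≤ K) (hδ : 0 < δ)
    (az bz aw bw lz lw : ℝ)
    (haz : 0 ≤ az) (hbz : 0 ≤ bz) (haw0 : 0 ≤ aw) (hbw : 0 ≤ bw)
    (hlz : 1 ≤ lz) (hlw : 1 ≤ lw) (hzw : lz ≤ lw)
    (haw : δ / 2 ≤ aw)
    (ha : |az - aw| ≤ K * δ / 10)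
    (hb : |bz - bw| * lz ^ q ≤ (K * δ / 20) * lz ^ p)
    (heq : az * lz ^ p + bz * lz ^ q + 1 = aw * lw ^ p + bw * lw ^ q + 1) :
    lw ^ p ≤ 2 * K * lz ^ p ∧ lw ≤ (2 * K) ^ (1 / p) * lz := by
  have hp0 : 0 < p := by linarith
  have hq0 : 0 ≤ q := by linarith
  have hlz0 : (0:ℝ) < lz := by linarith
  have hlw0 : (0:ℝ) < lw := by linarith
  have hlzp : 0 < lz ^ p := Real.rpow_pos_of_pos hlz0 p
  have hlzq : 0 < lz ^ q := Real.rpow_pos_of_pos hlz0 q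
  have hlwq : 0 < lw ^ q := Real.rpow_pos_of_pos hlw0 q
  have haz' : az ≤ aw + K * δ / 10 := by
    have := abs_le.mp ha
    linarith [this.2]
  have hbz' : bz ≤ bw + |bz - bw| := by
    have := le_abs_self (bz - bw)
    linarith
  have hbq : bw * lz ^ q ≤ bw * lw ^ q :=
    mul_le_mul_of_nonneg_left (Real.rpow_le_rpow (le_of_lt hlz0) hzw hq0) hbw
  have hbzq : bz * lz ^ q ≤ bw * lw ^ q + (K * δ / 20) * lz ^ p := by
    have h1 : bz * lz ^ q ≤ bw * lz ^ q + |bz - bw| * lz ^ q := by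
      nlinarith [le_of_lt hlzq]
    linarith
  have hazq : az * lz ^ p ≤ (aw + K * δ / 10) * lz ^ p :=
    mul_le_mul_of_nonneg_right haz' (le_of_lt hlzp)
  have hkey : aw * lw ^ p ≤ aw * lz ^ p + (3 * K * δ / 20) * lz ^ p := by
    nlinarith
  have h1 : lw ^ p ≤ 2 * K * lz ^ p := by
    nlinarith [mul_le_mul_of_nonneg_left
        (mul_le_mul_of_nonneg_right haw (le_of_lt hlzp))
        (by linarith : (0:ℝ) ≤ 2 * K - 1),
      mul_pos hδ hlzp, hkey, haw0]
  refine ⟨h1, ?_⟩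
  have h2K : (0:ℝ) < 2 * K := by linarith
  have hpow : ((2 * K) ^ (1 / p) * lz) ^ p = 2 * K * lz ^ p := by
    rw [Real.mul_rpow (Real.rpow_nonneg (le_of_lt h2K) _) (le_of_lt hlz0),
      ← Real.rpow_mul (le_of_lt h2K), one_div, inv_mul_cancel₀ (ne_of_gt hp0),
      Real.rpow_one]
  have hX : 0 ≤ (2 * K) ^ (1 / p) * lz :=
    mul_nonneg (Real.rpow_nonneg (le_of_lt h2K) _) (le_of_lt hlz0)
  by_contra hcon
  push_neg at hcon
  have := Real.rpow_lt_rpow hX hcon hp0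
  rw [hpow] at this
  linarith
end

section
/- Let 2 ≤ p ≤ q be real exponents, K ≥ 1 and δ > 0. Let a_z, b_z, a_w, b_w ≥ 0 and λ_z, λ_w ≥ 1 be real numbers satisfying: λ_z ≤ λ_w; b_w ≥ δ/2; |a_z − a_w| ≤ K·δ/10; |b_z − b_w|·λ_z^q ≤ (K·δ/20)·λ_z^p; and a_z·λ_z^p + b_z·λ_z^q + 1 = a_w·λ_w^p + b_w·λ_w^q + 1. Then λ_w^p ≤ 2K·λ_z^p, i.e. λ_w ≤ (2K)^{1/p}·λ_z. -/
/-- Comparability of intrinsic scaling factors, Case (2-2): both centers in the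
q-intrinsic phase (the coefficient `b` is bounded below by `δ/2` at `𝔴`). -/
theorem scaling_comparable_case_22 (p q K δ : ℝ)
    (hp : 2 ≤ p) (hpq : p ≤ q) (hK : 1 ≤ K) (hδ : 0 < δ)
    (az bz aw bw lz lw : ℝ)
    (haz : 0 ≤ az) (hbz : 0 ≤ bz) (haw : 0 ≤ aw) (hbw0 : 0 ≤ bw)
    (hlz : 1 ≤ lz) (hlw : 1 ≤ lw) (hzw : lz ≤ lw)
    (hbw : δ / 2 ≤ bw)
    (ha : |az - aw| ≤ K * δ / 10)
    (hb : |bz - bw| * lz ^ q ≤ (K * δ / 20) * lz ^ p)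
    (heq : az * lz ^ p + bz * lz ^ q + 1 = aw * lw ^ p + bw * lw ^ q + 1) :
    lw ^ p ≤ 2 * K * lz ^ p ∧ lw ≤ (2 * K) ^ (1 / p) * lz := by
  have hp0 : (0:ℝ) < p := by linarith
  have hlz0 : (0:ℝ) < lz := by linarith
  have hlw0 : (0:ℝ) < lw := by linarith
  have hlzp0 : (0:ℝ) < lz ^ p := Real.rpow_pos_of_pos hlz0 p
  have hlzq0 : (0:ℝ) < lz ^ q := Real.rpow_pos_of_pos hlz0 q
  have hlwp0 : (0:ℝ) < lw ^ p := Real.rpow_pos_of_pos hlw0 p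
  -- monotonicity facts
  have hpmon : lz ^ p ≤ lw ^ p := Real.rpow_le_rpow hlz0.le hzw hp0.le
  have hqmon : lz ^ q ≤ lw ^ q := Real.rpow_le_rpow hlz0.le hzw (by linarith)
  -- az ≤ aw + Kδ/10
  have ha' : az - aw ≤ K * δ / 10 := le_trans (le_abs_self _) ha
  -- bz lz^q ≤ bw lz^q + Kδ/20 lz^p
  have hb' : (bz - bw) * lz ^ q ≤ (K * δ / 20) * lz ^ p := by
    calc (bz - bw) * lz ^ q ≤ |bz - bw| * lz ^ q := by
          exact mul_le_mul_of_nonneg_right (le_abs_self _) hlzq0.le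
      _ ≤ (K * δ / 20) * lz ^ p := hb
  -- aw lz^p ≤ aw lw^p
  have haw' : aw * lz ^ p ≤ aw * lw ^ p := mul_le_mul_of_nonneg_left hpmon haw
  -- az lz^p ≤ aw lz^p + Kδ/10 lz^p
  have ha'' : az * lz ^ p ≤ aw * lz ^ p + (K * δ / 10) * lz ^ p := by nlinarith
  -- key: bw (lw^q - lz^q) ≤ (3Kδ/20) lz^p
  have hkey : bw * (lw ^ q - lz ^ q) ≤ (3 * K * δ / 20) * lz ^ p := by nlinarith
  -- so lw^q - lz^q ≤ (3K/10) lz^p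
  have hqdiff : lw ^ q - lz ^ q ≤ (3 * K / 10) * lz ^ p := by
    have h1 : (δ / 2) * (lw ^ q - lz ^ q) ≤ bw * (lw ^ q - lz ^ q) :=
      mul_le_mul_of_nonneg_right hbw (by linarith)
    nlinarith
  -- lw^q - lz^q ≥ lw^p - lz^p
  have hsplitw : lw ^ q = lw ^ p * lw ^ (q - p) := by
    rw [← Real.rpow_add hlw0]; ring_nf
  have hsplitz : lz ^ q = lz ^ p * lz ^ (q - p) := by
    rw [← Real.rpow_add hlz0]; ring_nf
  have h1w : (1:ℝ) ≤ lw ^ (q - p) := Real.one_le_rpow hlw (by linarith)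
  have h1z : (1:ℝ) ≤ lz ^ (q - p) := Real.one_le_rpow hlz (by linarith)
  have hexpmon : lz ^ (q - p) ≤ lw ^ (q - p) := Real.rpow_le_rpow hlz0.le hzw (by linarith)
  have hpq' : lw ^ p - lz ^ p ≤ lw ^ q - lz ^ q := by
    rw [hsplitw, hsplitz]; nlinarith
  have hAB : lz ^ p ≤ K * lz ^ p := le_mul_of_one_le_left hlzp0.le hK
  have hmain : lw ^ p ≤ 2 * K * lz ^ p := by
    have hstep : lw ^ p - lz ^ p ≤ 3 * K / 10 * lz ^ p := by linarith
    have h310 : 3 * K / 10 * lz ^ p = (3 / 10) * (K * lz ^ p) := by ring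
    have h2k : 2 * K * lz ^ p = 2 * (K * lz ^ p) := by ring
    rw [h2k]; rw [h310] at hstep; linarith
  refine ⟨hmain, ?_⟩
  have h2K : (0:ℝ) < 2 * K := by linarith
  have := Real.rpow_le_rpow hlwp0.le hmain (by positivity : (0:ℝ) ≤ 1 / p)
  calc lw = (lw ^ p) ^ (1 / p) := by
        rw [← Real.rpow_mul hlw0.le, mul_one_div, div_self hp0.ne', Real.rpow_one]
    _ ≤ (2 * K * lz ^ p) ^ (1 / p) := this
    _ = (2 * K) ^ (1 / p) * lz := by
        rw [Real.mul_rpow h2K.le hlzp0.le, ← Real.rpow_mul hlz0.le, mul_one_div,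
          div_self hp0.ne', Real.rpow_one]
end

section
/- Let δ > 0, β > 0, K ≥ 1, α ∈ (0,1], and let p, q be real exponents with 2 ≤ p ≤ q ≤ 2p. Let a_z, b_z, b_w ≥ 0, λ_z, λ_w ≥ 0 and ρ > 0 be real numbers satisfying: a_z ≥ δ/2; b_z·λ_z^q ≤ K·a_z·λ_z^p; |b_w − b_z| ≤ 6β·ρ^α; ρ^α·λ_w^q ≤ (K·δ/(120β))·λ_w^p; and λ_w^p ≤ 2K·λ_z^p. Then b_w·λ_w^q ≤ 9K³·a_z·λ_z^p. -/
/-- Key claim `b(𝔴) λ_𝔴^q ≲ a(𝔷) λ_𝔷^p` in Case (1-2) of the Vitali covering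
argument (equation (4.26) of the paper). -/
theorem case_12_key_claim (δ β K α p q : ℝ)
    (hδ : 0 < δ) (hβ : 0 < β) (hK : 1 ≤ K) (hα : α ∈ Set.Ioc (0:ℝ) 1)
    (hp : 2 ≤ p) (hpq : p ≤ q) (hq2p : q ≤ 2 * p)
    (az bz bw lz lw ρ : ℝ)
    (haz0 : 0 ≤ az) (hbz0 : 0 ≤ bz) (hbw0 : 0 ≤ bw)
    (hlz : 0 ≤ lz) (hlw : 0 ≤ lw) (hρ : 0 < ρ)
    (h1 : δ / 2 ≤ az)
    (h2 : bz * lz ^ q ≤ K * az * lz ^ p)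
    (h3 : |bw - bz| ≤ 6 * β * ρ ^ α)
    (h4 : ρ ^ α * lw ^ q ≤ (K * δ / (120 * β)) * lw ^ p)
    (h5 : lw ^ p ≤ 2 * K * lz ^ p) :
    bw * lw ^ q ≤ 9 * K ^ 3 * az * lz ^ p := by
  have hp0 : 0 < p := by linarith
  have hq0 : 0 < q := by linarith
  have hA : 0 ≤ lz ^ p := Real.rpow_nonneg hlz p
  have hB : 0 ≤ lz ^ q := Real.rpow_nonneg hlz q
  have hC : 0 ≤ lw ^ p := Real.rpow_nonneg hlw p
  have hD : 0 ≤ lw ^ q := Real.rpow_nonneg hlw q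
  have hR : 0 < ρ ^ α := Real.rpow_pos_of_pos hρ α
  have h3' : bw ≤ bz + 6 * β * ρ ^ α := by
    have := abs_le.mp h3
    linarith [this.1, this.2]
  -- key: lw^q ≤ 4 K^2 lz^q
  have hDq : lw ^ q ≤ 4 * K ^ 2 * lz ^ q := by
    rcases eq_or_lt_of_le hlw with h | hlw'
    · rw [← h, Real.zero_rpow (ne_of_gt hq0)]
      positivity
    · have e : p * (q / p) = q := by field_simp
      have key : lw ^ q = (lw ^ p) ^ (q / p) := by
        calc lw ^ q = lw ^ (p * (q / p)) := by rw [e]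
          _ = (lw ^ p) ^ (q / p) := Real.rpow_mul hlw p (q / p)
      have key2 : lz ^ q = (lz ^ p) ^ (q / p) := by
        calc lz ^ q = lz ^ (p * (q / p)) := by rw [e]
          _ = (lz ^ p) ^ (q / p) := Real.rpow_mul hlz p (q / p)
      have hqp0 : 0 ≤ q / p := div_nonneg (le_of_lt hq0) (le_of_lt hp0)
      have hqp2 : q / p ≤ 2 := by
        rw [div_le_iff₀ hp0]; linarith
      have step1 : (lw ^ p) ^ (q / p) ≤ (2 * K * lz ^ p) ^ (q / p) :=
        Real.rpow_le_rpow hC h5 hqp0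
      have step2 : (2 * K * lz ^ p) ^ (q / p) = (2 * K) ^ (q / p) * (lz ^ p) ^ (q / p) :=
        Real.mul_rpow (by positivity) hA
      have step3 : (2 * K) ^ (q / p) ≤ (2 * K) ^ (2 : ℝ) :=
        Real.rpow_le_rpow_of_exponent_le (by linarith) hqp2
      have step4 : (2 * K) ^ (2 : ℝ) = 4 * K ^ 2 := by
        rw [show (2:ℝ) = ((2:ℕ):ℝ) by norm_num, Real.rpow_natCast]
        ring
      calc lw ^ q = (lw ^ p) ^ (q / p) := key
        _ ≤ (2 * K) ^ (q / p) * (lz ^ p) ^ (q / p) := by rw [← step2]; exact step1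
        _ ≤ 4 * K ^ 2 * (lz ^ p) ^ (q / p) := by
            apply mul_le_mul_of_nonneg_right _ (Real.rpow_nonneg hA _)
            rw [← step4]; exact step3
        _ = 4 * K ^ 2 * lz ^ q := by rw [← key2]
  -- now pure algebra
  have hbzD : bz * lw ^ q ≤ 4 * K ^ 2 * (K * az * lz ^ p) := by
    calc bz * lw ^ q ≤ bz * (4 * K ^ 2 * lz ^ q) :=
          mul_le_mul_of_nonneg_left hDq hbz0
      _ = 4 * K ^ 2 * (bz * lz ^ q) := by ring
      _ ≤ 4 * K ^ 2 * (K * az * lz ^ p) := by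
          apply mul_le_mul_of_nonneg_left h2; positivity
  have hβD : 6 * β * ρ ^ α * lw ^ q ≤ 6 * β * ((K * δ / (120 * β)) * lw ^ p) := by
    have : 6 * β * ρ ^ α * lw ^ q = 6 * β * (ρ ^ α * lw ^ q) := by ring
    rw [this]
    apply mul_le_mul_of_nonneg_left h4; positivity
  have hsimp : 6 * β * ((K * δ / (120 * β)) * lw ^ p) = (K * δ / 20) * lw ^ p := by
    field_simp; ring
  have hend : (K * δ / 20) * lw ^ p ≤ (K * δ / 20) * (2 * K * lz ^ p) := by
    apply mul_le_mul_of_nonneg_left h5; positivity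
  have hbwD : bw * lw ^ q ≤ (bz + 6 * β * ρ ^ α) * lw ^ q :=
    mul_le_mul_of_nonneg_right h3' hD
  have hδaz : K * δ / 20 * (2 * K * lz ^ p) ≤ K ^ 2 / 5 * (az * lz ^ p) := by
    have e : K * δ / 20 * (2 * K * lz ^ p) = (K ^ 2 / 10) * (δ * lz ^ p) := by ring
    rw [e]
    have h2az : δ * lz ^ p ≤ 2 * az * lz ^ p :=
      mul_le_mul_of_nonneg_right (by linarith) hA
    calc (K ^ 2 / 10) * (δ * lz ^ p) ≤ (K ^ 2 / 10) * (2 * az * lz ^ p) :=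
          mul_le_mul_of_nonneg_left h2az (by positivity)
      _ = K ^ 2 / 5 * (az * lz ^ p) := by ring
  have hA' : 0 ≤ az * lz ^ p := mul_nonneg haz0 hA
  have hK25 : K ^ 2 / 5 ≤ K ^ 3 := by nlinarith
  have hfin : K ^ 2 / 5 * (az * lz ^ p) ≤ K ^ 3 * (az * lz ^ p) :=
    mul_le_mul_of_nonneg_right hK25 hA'
  have hsplit : (bz + 6 * β * ρ ^ α) * lw ^ q
      = bz * lw ^ q + 6 * β * ρ ^ α * lw ^ q := by ring
  have hK3pos : 0 ≤ K ^ 3 * (az * lz ^ p) := by positivity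
  linarith [hbwD, hbzD, hβD, hend, hδaz, hfin, hsplit, hK3pos, hsimp.le]
end

section
/- Let (X, μ) be a measure space, let Q ⊆ X be a measurable set with 0 < μ(Q) < ∞, and let f : X → [0, ∞) be a measurable function integrable on Q. Let θ ∈ (0, 1), c ≥ 1 and M > 0 be real numbers, and suppose that (1/μ(Q))·∫_Q f dμ ≤ M. Then ((1/μ(Q))·∫_Q f^θ dμ)^{1/θ} ≤ M/(2c) + (M^{1−θ}/μ(Q))·∫_{Q ∩ {f > M/(2c)^{1/θ}}} f^θ dμ. -/
open MeasureTheory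

/-! By Jensen's inequality for the concave map `t ↦ t ^ θ`, the mean `A = ⨍_Q f ^ θ` is at most
`M ^ θ`, hence `A ^ (1/θ) = A ^ (1/θ - 1) * A ≤ M ^ (1 - θ) * A`. Off the superlevel set
`{f > M / (2c) ^ (1/θ)}` the integrand `f ^ θ` is at most `M ^ θ / (2c)`, which splits `A` into
`M ^ θ / (2c)` plus the contribution of the superlevel set. -/
theorem MeasureTheory.Integrable.rpow_of_le_one {X : Type*} [MeasurableSpace X] {μ : Measure X}
    [IsFiniteMeasure μ] {f : X → ℝ} (hf : Integrable f μ) (hf0 : 0 ≤ᵐ[μ] f) {θ : ℝ}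
    (hθ0 : 0 < θ) (hθ1 : θ ≤ 1) : Integrable (fun x => f x ^ θ) μ := by
  have hθ : ENNReal.ofReal θ ≠ 0 := by simpa using hθ0
  have hmem : MemLp f (ENNReal.ofReal θ) μ :=
    (memLp_one_iff_integrable.2 hf).mono_exponent (ENNReal.ofReal_le_one.2 hθ1)
  have := hmem.norm_rpow_div (ENNReal.ofReal θ)
  rw [ENNReal.div_self hθ ENNReal.ofReal_ne_top, ENNReal.toReal_ofReal hθ0.le,
    memLp_one_iff_integrable] at this
  refine this.congr ?_
  filter_upwards [hf0] with x hx
  rw [Real.norm_of_nonneg hx]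

theorem MeasureTheory.setAverage_rpow_le_rpow_setAverage {X : Type*} [MeasurableSpace X]
    {μ : Measure X} {s : Set X} (hs0 : μ s ≠ 0) (hs : μ s ≠ ⊤) {f : X → ℝ}
    (hf : IntegrableOn f s μ) (hf0 : ∀ᵐ x ∂μ.restrict s, 0 ≤ f x) {θ : ℝ}
    (hθ0 : 0 < θ) (hθ1 : θ ≤ 1) : ⨍ x in s, f x ^ θ ∂μ ≤ (⨍ x in s, f x ∂μ) ^ θ :=
  have : IsFiniteMeasure (μ.restrict s) := isFiniteMeasure_restrict.2 hs
  (Real.concaveOn_rpow hθ0.le hθ1).le_map_set_average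
    (continuousOn_id.rpow_const fun _ _ => Or.inr hθ0.le) isClosed_Ici hs0 hs hf0 hf
    (hf.rpow_of_le_one hf0 hθ0 hθ1)

theorem Real.rpow_one_div_le_rpow_one_sub_mul {a M θ : ℝ} (ha : 0 ≤ a) (hM : 0 ≤ M)
    (hθ0 : 0 < θ) (hθ1 : θ ≤ 1) (haM : a ≤ M ^ θ) : a ^ (1 / θ) ≤ M ^ (1 - θ) * a := by
  rcases ha.eq_or_lt with rfl | ha
  · rw [Real.zero_rpow (by positivity), mul_zero]
  have hexp : 0 ≤ 1 / θ - 1 := by rw [sub_nonneg, le_div_iff₀ hθ0]; linarith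
  calc a ^ (1 / θ) = a ^ (1 / θ - 1) * a := by
        rw [← Real.rpow_add_one ha.ne', sub_add_cancel]
    _ ≤ (M ^ θ) ^ (1 / θ - 1) * a := by gcongr
    _ = M ^ (1 - θ) * a := by
        rw [← Real.rpow_mul hM]
        congr 2
        field_simp

theorem Real.div_rpow_one_div_rpow {a b θ : ℝ} (ha : 0 ≤ a) (hb : 0 ≤ b) (hθ : θ ≠ 0) :
    (a / b ^ (1 / θ)) ^ θ = a ^ θ / b := by
  rw [Real.div_rpow ha (by positivity), one_div, Real.rpow_inv_rpow hb hθ]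

theorem MeasureTheory.setAverage_le_add_inv_mul_setIntegral_inter {X : Type*}
    [MeasurableSpace X] {μ : Measure X} {s t : Set X} (hs : MeasurableSet s) (hs0 : μ s ≠ 0)
    (hsfin : μ s ≠ ⊤) (ht : MeasurableSet t) {g : X → ℝ} (hg : IntegrableOn g s μ) {C : ℝ}
    (hC : 0 ≤ C) (hgC : ∀ x ∈ s \ t, g x ≤ C) :
    ⨍ x in s, g x ∂μ ≤ C + (μ.real s)⁻¹ * ∫ x in s ∩ t, g x ∂μ := by
  have hs_pos : 0 < μ.real s := ENNReal.toReal_pos hs0 hsfin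
  have hdiff : ∫ x in s \ t, g x ∂μ ≤ μ.real s * C :=
    calc ∫ x in s \ t, g x ∂μ ≤ ∫ _ in s \ t, C ∂μ :=
          setIntegral_mono_on (hg.mono_set Set.sdiff_subset)
            (integrableOn_const (measure_mono Set.sdiff_subset |>.trans_lt hsfin.lt_top).ne)
            (hs.diff ht) hgC
      _ = μ.real (s \ t) * C := setIntegral_const C
      _ ≤ μ.real s * C := by gcongr; exact Set.sdiff_subset
  rw [setAverage_eq, smul_eq_mul, inv_mul_le_iff₀ hs_pos, mul_add, mul_inv_cancel_left₀ hs_pos.ne',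
    ← integral_inter_add_sdiff ht hg]
  linarith

/-- Power-mean inequality combined with a superlevel-set splitting: the
measure-theoretic core of equations (4.32)–(4.33) of the paper. -/
theorem power_mean_superlevel_split {X : Type*} [MeasurableSpace X]
    (μ : Measure X) (Q : Set X) (hQ : MeasurableSet Q)
    (hQ0 : 0 < μ Q) (hQfin : μ Q < ⊤)
    (f : X → ℝ) (hf : Measurable f) (hf0 : ∀ x, 0 ≤ f x)
    (hint : IntegrableOn f Q μ)
    (θ c M : ℝ) (hθ : θ ∈ Set.Ioo (0:ℝ) 1) (hc : 1 ≤ c) (hM : 0 < M)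
    (havg : (1 / (μ Q).toReal) * ∫ x in Q, f x ∂μ ≤ M) :
    ((1 / (μ Q).toReal) * ∫ x in Q, (f x) ^ θ ∂μ) ^ (1 / θ) ≤
      M / (2 * c) +
        (M ^ (1 - θ) / (μ Q).toReal) *
          ∫ x in Q ∩ {x | M / (2 * c) ^ (1 / θ) < f x}, (f x) ^ θ ∂μ := by
  obtain ⟨hθ0, hθ1⟩ := hθ
  have : IsFiniteMeasure (μ.restrict Q) := isFiniteMeasure_restrict.2 hQfin.ne
  have hf0Q : ∀ᵐ x ∂μ.restrict Q, 0 ≤ f x := .of_forall hf0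
  have hav (g : X → ℝ) : (1 / (μ Q).toReal) * ∫ x in Q, g x ∂μ = ⨍ x in Q, g x ∂μ := by
    rw [setAverage_eq, smul_eq_mul, one_div, measureReal_def]
  rw [hav] at havg ⊢
  set I := ∫ x in Q ∩ {x | M / (2 * c) ^ (1 / θ) < f x}, f x ^ θ ∂μ
  have hav_nonneg {g : X → ℝ} (hg : ∀ x, 0 ≤ g x) : 0 ≤ ⨍ x in Q, g x ∂μ := by
    rw [setAverage_eq]
    exact smul_nonneg (by positivity) (integral_nonneg hg)
  have hA0 := hav_nonneg fun x => Real.rpow_nonneg (hf0 x) θ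
  have hAM : ⨍ x in Q, f x ^ θ ∂μ ≤ M ^ θ :=
    calc ⨍ x in Q, f x ^ θ ∂μ ≤ (⨍ x in Q, f x ∂μ) ^ θ :=
          setAverage_rpow_le_rpow_setAverage hQ0.ne' hQfin.ne hint hf0Q hθ0 hθ1.le
      _ ≤ M ^ θ := by gcongr; exact hav_nonneg hf0
  have hsplit : ⨍ x in Q, f x ^ θ ∂μ ≤ M ^ θ / (2 * c) + (μ.real Q)⁻¹ * I :=
    setAverage_le_add_inv_mul_setIntegral_inter hQ hQ0.ne' hQfin.ne
      (measurableSet_lt measurable_const hf) (hint.rpow_of_le_one hf0Q hθ0 hθ1.le)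
      (by positivity) fun x hx => by
        rw [← Real.div_rpow_one_div_rpow hM.le (by linarith) hθ0.ne']
        exact Real.rpow_le_rpow (hf0 x) (not_lt.1 hx.2) hθ0.le
  calc (⨍ x in Q, f x ^ θ ∂μ) ^ (1 / θ) ≤ M ^ (1 - θ) * ⨍ x in Q, f x ^ θ ∂μ :=
        Real.rpow_one_div_le_rpow_one_sub_mul hA0 hM.le hθ0 hθ1.le hAM
    _ ≤ M ^ (1 - θ) * (M ^ θ / (2 * c) + (μ.real Q)⁻¹ * I) := by gcongr
    _ = M / (2 * c) + (M ^ (1 - θ) / (μ Q).toReal) * I := by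
        rw [mul_add, ← mul_div_assoc, ← Real.rpow_add hM, sub_add_cancel, Real.rpow_one,
          measureReal_def]
        ring
end

section
/- Let (X, μ) be a measure space, let Q₁ ⊆ Q₂ ⊆ X be measurable sets with μ(Q₂) < ∞, and let f, h : X → [0, ∞) be measurable functions with ∫_{Q₂} f^θ dμ < ∞ and ∫_{Q₂} h^{1+ε} dμ < ∞. Let θ ∈ (0, 1), ε ∈ (0, 1), c ≥ 1, Λ₂ > 0 and k > 0 be real numbers, and set f_k := min{f, k}. Suppose that for every Λ > Λ₂ one has ∫_{Q₁ ∩ {f_k > Λ}} f_k^{1−θ}·f^θ dμ ≤ c·Λ^{1−θ}·∫_{Q₂ ∩ {f_k > Λ}} f^θ dμ + c·∫_{Q₂ ∩ {h > Λ}} h dμ. Then ∫_{Q₁} f_k^{1−θ+ε}·f^θ dμ ≤ Λ₂^ε·∫_{Q₁} f_k^{1−θ}·f^θ dμ + (c·ε/(1 + ε − θ))·∫_{Q₂} f_k^{1−θ+ε}·f^θ dμ + c·∫_{Q₂} h^{1+ε} dμ. -/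
/-!
Against the measure `μ₁` with density `g^β ψ` on `Q₁` (here `g = min f k`, `β = 1 - θ`,
`ψ = f^θ`), the layer cake formula writes `∫ g^ε dμ₁ = ε ∫₀^∞ t^(ε-1) μ₁{g > t} dt`. Levels
`t ≤ Λ₂` contribute at most `Λ₂^ε μ₁(Q₁)`. For `t > Λ₂` the level-set estimate bounds
`μ₁{g > t}` by `c (t^β ν{g > t} + ρ{h > t})`, where `ν`, `ρ` have densities `ψ`, `h` on `Q₂`, and
the layer cake formula read backwards (exponents `β + ε` and `ε`) turns the two resulting
integrals into `∫ g^(β+ε) dν / (β + ε)` and `∫ h^ε dρ / ε`. Everything is done with measures of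
superlevel sets in `ℝ≥0∞`, so the only integrability needed is for the final conversion back to
Bochner integrals.
-/

open MeasureTheory

namespace MeasureTheory

open Set

variable {α : Type*} [MeasurableSpace α]

theorem setLIntegral_Ioc_zero_ofReal_rpow {r : ℝ} (hr : -1 < r) {b : ℝ} (hb : 0 ≤ b) :
    ∫⁻ t in Ioc 0 b, ENNReal.ofReal (t ^ r) = ENNReal.ofReal (b ^ (r + 1) / (r + 1)) := by
  have hint : IntegrableOn (fun t : ℝ => t ^ r) (Ioc 0 b) :=
    (intervalIntegrable_iff_integrableOn_Ioc_of_le hb).1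
      (intervalIntegral.intervalIntegrable_rpow' hr)
  rw [← ofReal_integral_eq_lintegral_ofReal hint
      (ae_restrict_of_forall_mem measurableSet_Ioc fun t ht => Real.rpow_nonneg ht.1.le r),
    ← intervalIntegral.integral_of_le hb, integral_rpow (Or.inl hr),
    Real.zero_rpow (by linarith), sub_zero]

theorem antitone_measure_setOf_lt (μ : Measure α) (f : α → ℝ) :
    Antitone fun t : ℝ => μ {x | t < f x} :=
  fun _ _ hst => measure_mono fun _ hx => lt_of_le_of_lt hst hx

theorem ofReal_integral_le_lintegral_ofReal {μ : Measure α} {f : α → ℝ} (hf0 : 0 ≤ᵐ[μ] f)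
    (hf : AEStronglyMeasurable f μ) :
    ENNReal.ofReal (∫ x, f x ∂μ) ≤ ∫⁻ x, ENNReal.ofReal (f x) ∂μ := by
  rw [integral_eq_lintegral_of_nonneg_ae hf0 hf]
  exact ENNReal.ofReal_toReal_le

section LayerCake

variable (μ : Measure α) {f : α → ℝ}

theorem setLIntegral_Ioi_meas_lt_mul_rpow_le (hf0 : 0 ≤ᵐ[μ] f) (hf : AEMeasurable f μ)
    {p : ℝ} (hp : 0 < p) {a : ℝ} (ha : 0 ≤ a) :
    ∫⁻ t in Ioi a, μ {x | t < f x} * ENNReal.ofReal (t ^ (p - 1)) ≤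
      ENNReal.ofReal p⁻¹ * ∫⁻ x, ENNReal.ofReal (f x ^ p) ∂μ := by
  refine (lintegral_mono_set (Ioi_subset_Ioi ha)).trans_eq ?_
  rw [lintegral_rpow_eq_lintegral_meas_lt_mul μ hf0 hf hp, ← mul_assoc,
    ← ENNReal.ofReal_mul (inv_nonneg.2 hp.le), inv_mul_cancel₀ hp.ne', ENNReal.ofReal_one,
    one_mul]

theorem lintegral_rpow_le_add_setLIntegral_Ioi_meas_lt (hf0 : 0 ≤ᵐ[μ] f)
    (hf : AEMeasurable f μ) {ε : ℝ} (hε : 0 < ε) {a : ℝ} (ha : 0 ≤ a) :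
    ∫⁻ x, ENNReal.ofReal (f x ^ ε) ∂μ ≤ ENNReal.ofReal (a ^ ε) * μ univ +
      ENNReal.ofReal ε * ∫⁻ t in Ioi a, μ {x | t < f x} * ENNReal.ofReal (t ^ (ε - 1)) := by
  rw [lintegral_rpow_eq_lintegral_meas_lt_mul μ hf0 hf hε, ← Ioc_union_Ioi_eq_Ioi ha,
    lintegral_union measurableSet_Ioi (Ioc_disjoint_Ioi le_rfl), mul_add]
  gcongr ?_ + _
  calc ENNReal.ofReal ε * ∫⁻ t in Ioc 0 a, μ {x | t < f x} * ENNReal.ofReal (t ^ (ε - 1))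
      ≤ ENNReal.ofReal ε * ∫⁻ t in Ioc 0 a, μ univ * ENNReal.ofReal (t ^ (ε - 1)) := by
        gcongr
        exact subset_univ _
    _ = ENNReal.ofReal (a ^ ε) * μ univ := by
        rw [lintegral_const_mul _ (by fun_prop),
          setLIntegral_Ioc_zero_ofReal_rpow (by linarith) ha, sub_add_cancel, mul_left_comm,
          ← ENNReal.ofReal_mul hε.le, mul_div_cancel₀ _ hε.ne', mul_comm]

end LayerCake

theorem lintegral_rpow_le_of_meas_lt_le {μ ν ρ : Measure α} {g h : α → ℝ}
    (hg : Measurable g) (hh : Measurable h) (hg0 : ∀ x, 0 ≤ g x) (hh0 : ∀ x, 0 ≤ h x)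
    {β ε c a : ℝ} (hβε : 0 < β + ε) (hε : 0 < ε) (ha : 0 ≤ a)
    (hlevel : ∀ t, a < t → μ {x | t < g x} ≤
      ENNReal.ofReal c * (ENNReal.ofReal (t ^ β) * ν {x | t < g x} + ρ {x | t < h x})) :
    ∫⁻ x, ENNReal.ofReal (g x ^ ε) ∂μ ≤ ENNReal.ofReal (a ^ ε) * μ univ +
      ENNReal.ofReal (c * ε / (β + ε)) * ∫⁻ x, ENNReal.ofReal (g x ^ (β + ε)) ∂ν +
      ENNReal.ofReal c * ∫⁻ x, ENNReal.ofReal (h x ^ ε) ∂ρ := by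
  have hρ_meas : Measurable fun t : ℝ => ρ {x | t < h x} * ENNReal.ofReal (t ^ (ε - 1)) :=
    (antitone_measure_setOf_lt ρ h).measurable.mul (by fun_prop)
  calc ∫⁻ x, ENNReal.ofReal (g x ^ ε) ∂μ
      ≤ ENNReal.ofReal (a ^ ε) * μ univ +
        ENNReal.ofReal ε * ∫⁻ t in Ioi a, μ {x | t < g x} * ENNReal.ofReal (t ^ (ε - 1)) :=
        lintegral_rpow_le_add_setLIntegral_Ioi_meas_lt μ (ae_of_all _ hg0) hg.aemeasurable hε ha
    _ ≤ ENNReal.ofReal (a ^ ε) * μ univ + ENNReal.ofReal ε * ∫⁻ t in Ioi a,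
          ENNReal.ofReal c * (ν {x | t < g x} * ENNReal.ofReal (t ^ (β + ε - 1)) +
            ρ {x | t < h x} * ENNReal.ofReal (t ^ (ε - 1))) := by
        gcongr _ + _ * ?_
        refine setLIntegral_mono' measurableSet_Ioi fun t (ht : a < t) => ?_
        have ht0 : 0 < t := ha.trans_lt ht
        calc μ {x | t < g x} * ENNReal.ofReal (t ^ (ε - 1))
            ≤ ENNReal.ofReal c * (ENNReal.ofReal (t ^ β) * ν {x | t < g x} + ρ {x | t < h x}) *
                ENNReal.ofReal (t ^ (ε - 1)) := by gcongr; exact hlevel t ht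
          _ = _ := by
            rw [add_sub_assoc, Real.rpow_add ht0, ENNReal.ofReal_mul (by positivity)]
            ring
    _ = ENNReal.ofReal (a ^ ε) * μ univ + ENNReal.ofReal ε * (ENNReal.ofReal c *
          ((∫⁻ t in Ioi a, ν {x | t < g x} * ENNReal.ofReal (t ^ (β + ε - 1))) +
            ∫⁻ t in Ioi a, ρ {x | t < h x} * ENNReal.ofReal (t ^ (ε - 1)))) := by
        rw [lintegral_const_mul' _ _ ENNReal.ofReal_ne_top, lintegral_add_right _ hρ_meas]
    _ ≤ ENNReal.ofReal (a ^ ε) * μ univ + ENNReal.ofReal ε * (ENNReal.ofReal c *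
          (ENNReal.ofReal (β + ε)⁻¹ * ∫⁻ x, ENNReal.ofReal (g x ^ (β + ε)) ∂ν +
            ENNReal.ofReal ε⁻¹ * ∫⁻ x, ENNReal.ofReal (h x ^ ε) ∂ρ)) := by
        gcongr
        · exact setLIntegral_Ioi_meas_lt_mul_rpow_le ν (ae_of_all _ hg0) hg.aemeasurable hβε ha
        · exact setLIntegral_Ioi_meas_lt_mul_rpow_le ρ (ae_of_all _ hh0) hh.aemeasurable hε ha
    _ = _ := by
        have hν : ENNReal.ofReal ε * ENNReal.ofReal c * ENNReal.ofReal (β + ε)⁻¹ =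
            ENNReal.ofReal (c * ε / (β + ε)) := by
          rw [← ENNReal.ofReal_mul hε.le, ← ENNReal.ofReal_mul' (by positivity)]
          ring_nf
        have hρ : ENNReal.ofReal ε * ENNReal.ofReal c * ENNReal.ofReal ε⁻¹ =
            ENNReal.ofReal c := by
          rw [mul_right_comm, ← ENNReal.ofReal_mul hε.le, mul_inv_cancel₀ hε.ne',
            ENNReal.ofReal_one, one_mul]
        rw [mul_add, mul_add, ← mul_assoc, ← mul_assoc, ← mul_assoc, ← mul_assoc, hν, hρ,
          add_assoc]

theorem withDensity_ofReal_restrict_apply (μ : Measure α) (Q : Set α) (F : α → ℝ) {S : Set α}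
    (hS : MeasurableSet S) :
    ((μ.restrict Q).withDensity fun x => ENNReal.ofReal (F x)) S =
      ∫⁻ x in Q ∩ S, ENNReal.ofReal (F x) ∂μ := by
  rw [withDensity_apply _ hS, Measure.restrict_restrict hS, inter_comm]

theorem lintegral_withDensity_ofReal_eq_ofReal_integral {μ : Measure α} {F G H : α → ℝ}
    (hF : Measurable F) (hG : Measurable G) (hF0 : ∀ x, 0 ≤ F x) (hG0 : ∀ x, 0 ≤ G x)
    (hH : Integrable H μ) (hFGH : ∀ x, F x * G x = H x) :
    ∫⁻ x, ENNReal.ofReal (G x) ∂(μ.withDensity fun x => ENNReal.ofReal (F x)) =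
      ENNReal.ofReal (∫ x, H x ∂μ) := by
  rw [lintegral_withDensity_eq_lintegral_mul _ (by fun_prop) (by fun_prop),
    ofReal_integral_eq_lintegral_ofReal hH
      (ae_of_all _ fun x => hFGH x ▸ mul_nonneg (hF0 x) (hG0 x))]
  exact lintegral_congr fun x => by rw [Pi.mul_apply, ← ENNReal.ofReal_mul (hF0 x), hFGH]

theorem withDensity_setOf_lt_le_of_setIntegral_le {μ : Measure α} {Q₁ Q₂ : Set α}
    {φ ψ g h : α → ℝ} (hφ0 : ∀ x, 0 ≤ φ x) (hφ : IntegrableOn φ Q₁ μ) (hψ : Measurable ψ)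
    (hψ0 : ∀ x, 0 ≤ ψ x) (hg : Measurable g) (hh : Measurable h) (hh0 : ∀ x, 0 ≤ h x)
    {β c t : ℝ} (hc : 0 ≤ c) (ht : 0 ≤ t)
    (hle : ∫ x in Q₁ ∩ {x | t < g x}, φ x ∂μ ≤
      c * t ^ β * ∫ x in Q₂ ∩ {x | t < g x}, ψ x ∂μ + c * ∫ x in Q₂ ∩ {x | t < h x}, h x ∂μ) :
    ((μ.restrict Q₁).withDensity fun x => ENNReal.ofReal (φ x)) {x | t < g x} ≤
      ENNReal.ofReal c * (ENNReal.ofReal (t ^ β) *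
        ((μ.restrict Q₂).withDensity fun x => ENNReal.ofReal (ψ x)) {x | t < g x} +
        ((μ.restrict Q₂).withDensity fun x => ENNReal.ofReal (h x)) {x | t < h x}) := by
  simp only [withDensity_ofReal_restrict_apply _ _ _ (measurableSet_lt measurable_const hg),
    withDensity_ofReal_restrict_apply _ _ _ (measurableSet_lt measurable_const hh)]
  rw [← ofReal_integral_eq_lintegral_ofReal (hφ.mono_set inter_subset_left) (ae_of_all _ hφ0)]
  calc _ ≤ ENNReal.ofReal (c * (t ^ β * ∫ x in Q₂ ∩ {x | t < g x}, ψ x ∂μ +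
          ∫ x in Q₂ ∩ {x | t < h x}, h x ∂μ)) :=
        ENNReal.ofReal_le_ofReal (hle.trans_eq (by ring))
    _ ≤ _ := by
      rw [ENNReal.ofReal_mul hc]
      gcongr
      refine ENNReal.ofReal_add_le.trans ?_
      rw [ENNReal.ofReal_mul (Real.rpow_nonneg ht _)]
      gcongr
      · exact ofReal_integral_le_lintegral_ofReal (ae_of_all _ hψ0) hψ.aestronglyMeasurable
      · exact ofReal_integral_le_lintegral_ofReal (ae_of_all _ hh0) hh.aestronglyMeasurable

theorem setIntegral_rpow_add_mul_le_of_level_estimate {μ : Measure α} {Q₁ Q₂ : Set α}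
    {g ψ h : α → ℝ} (hg : Measurable g) (hψ : Measurable ψ) (hh : Measurable h)
    (hg0 : ∀ x, 0 ≤ g x) (hψ0 : ∀ x, 0 ≤ ψ x) (hh0 : ∀ x, 0 ≤ h x)
    {β ε c a : ℝ} (hβε : 0 < β + ε) (hε : 0 < ε) (hc : 0 ≤ c) (ha : 0 ≤ a)
    (hβ₁ : IntegrableOn (fun x => g x ^ β * ψ x) Q₁ μ)
    (hβε₁ : IntegrableOn (fun x => g x ^ (β + ε) * ψ x) Q₁ μ)
    (hβε₂ : IntegrableOn (fun x => g x ^ (β + ε) * ψ x) Q₂ μ)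
    (hh₂ : IntegrableOn (fun x => h x ^ (1 + ε)) Q₂ μ)
    (hle : ∀ t, a < t →
      ∫ x in Q₁ ∩ {x | t < g x}, g x ^ β * ψ x ∂μ ≤
        c * t ^ β * ∫ x in Q₂ ∩ {x | t < g x}, ψ x ∂μ + c * ∫ x in Q₂ ∩ {x | t < h x}, h x ∂μ) :
    ∫ x in Q₁, g x ^ (β + ε) * ψ x ∂μ ≤
      a ^ ε * ∫ x in Q₁, g x ^ β * ψ x ∂μ +
        c * ε / (β + ε) * ∫ x in Q₂, g x ^ (β + ε) * ψ x ∂μ + c * ∫ x in Q₂, h x ^ (1 + ε) ∂μ := by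
  have hφ0 : ∀ x, 0 ≤ g x ^ β * ψ x := fun x => mul_nonneg (Real.rpow_nonneg (hg0 x) _) (hψ0 x)
  have key := lintegral_rpow_le_of_meas_lt_le hg hh hg0 hh0 hβε hε ha fun t ht =>
    withDensity_setOf_lt_le_of_setIntegral_le hφ0 hβ₁ hψ hψ0 hg hh hh0 hc (ha.trans ht.le)
      (hle t ht)
  have hL := lintegral_withDensity_ofReal_eq_ofReal_integral (μ := μ.restrict Q₁)
    (by fun_prop) (hg.pow_const ε) hφ0 (fun x => Real.rpow_nonneg (hg0 x) ε) hβε₁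
    fun x => by rw [Real.rpow_add' (hg0 x) hβε.ne']; ring
  have hI₁ : ((μ.restrict Q₁).withDensity fun x => ENNReal.ofReal (g x ^ β * ψ x)) univ =
      ENNReal.ofReal (∫ x in Q₁, g x ^ β * ψ x ∂μ) := by
    rw [withDensity_ofReal_restrict_apply _ _ _ MeasurableSet.univ, inter_univ,
      ofReal_integral_eq_lintegral_ofReal hβ₁ (ae_of_all _ hφ0)]
  have hI₂ := lintegral_withDensity_ofReal_eq_ofReal_integral (μ := μ.restrict Q₂)
    hψ (hg.pow_const (β + ε)) hψ0 (fun x => Real.rpow_nonneg (hg0 x) _) hβε₂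
    fun x => mul_comm _ _
  have hI₃ := lintegral_withDensity_ofReal_eq_ofReal_integral (μ := μ.restrict Q₂)
    hh (hh.pow_const ε) hh0 (fun x => Real.rpow_nonneg (hh0 x) ε) hh₂
    fun x => (Real.rpow_one_add' (hh0 x) (by linarith)).symm
  have hK : 0 ≤ c * ε / (β + ε) := by positivity
  have hT₁ : 0 ≤ a ^ ε * ∫ x in Q₁, g x ^ β * ψ x ∂μ :=
    mul_nonneg (Real.rpow_nonneg ha ε) (integral_nonneg hφ0)
  have hT₂ : 0 ≤ c * ε / (β + ε) * ∫ x in Q₂, g x ^ (β + ε) * ψ x ∂μ :=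
    mul_nonneg hK (integral_nonneg fun x => mul_nonneg (Real.rpow_nonneg (hg0 x) _) (hψ0 x))
  have hT₃ : 0 ≤ c * ∫ x in Q₂, h x ^ (1 + ε) ∂μ :=
    mul_nonneg hc (integral_nonneg fun x => Real.rpow_nonneg (hh0 x) _)
  refine (ENNReal.ofReal_le_ofReal_iff (by linarith)).1 ((hL.symm.trans_le key).trans_eq ?_)
  rw [hI₁, hI₂, hI₃, ← ENNReal.ofReal_mul (Real.rpow_nonneg ha ε), ← ENNReal.ofReal_mul hK,
    ← ENNReal.ofReal_mul hc, ← ENNReal.ofReal_add hT₁ hT₂, ← ENNReal.ofReal_add (by linarith) hT₃]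

end MeasureTheory

theorem fubini_truncation_step_general {X : Type*} [MeasurableSpace X]
    (μ : Measure X) (Q₁ Q₂ : Set X)
    (hsub : Q₁ ⊆ Q₂)
    (f h : X → ℝ) (hf : Measurable f) (hh : Measurable h)
    (hf0 : ∀ x, 0 ≤ f x) (hh0 : ∀ x, 0 ≤ h x)
    (θ ε c Λ₂ k : ℝ)
    (hθ : θ ∈ Set.Ioo (0:ℝ) 1) (hε : ε ∈ Set.Ioo (0:ℝ) 1)
    (hc : 1 ≤ c) (hΛ₂ : 0 < Λ₂) (hk : 0 < k)
    (hfint : IntegrableOn (fun x => (f x) ^ θ) Q₂ μ)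
    (hhint : IntegrableOn (fun x => (h x) ^ (1 + ε)) Q₂ μ)
    (hyp : ∀ Λ : ℝ, Λ₂ < Λ →
      ∫ x in Q₁ ∩ {x | Λ < min (f x) k}, (min (f x) k) ^ (1 - θ) * (f x) ^ θ ∂μ ≤
        c * Λ ^ (1 - θ) * ∫ x in Q₂ ∩ {x | Λ < min (f x) k}, (f x) ^ θ ∂μ +
          c * ∫ x in Q₂ ∩ {x | Λ < h x}, h x ∂μ) :
    ∫ x in Q₁, (min (f x) k) ^ (1 - θ + ε) * (f x) ^ θ ∂μ ≤
      Λ₂ ^ ε * ∫ x in Q₁, (min (f x) k) ^ (1 - θ) * (f x) ^ θ ∂μ +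
        (c * ε / (1 + ε - θ)) *
          ∫ x in Q₂, (min (f x) k) ^ (1 - θ + ε) * (f x) ^ θ ∂μ +
        c * ∫ x in Q₂, (h x) ^ (1 + ε) ∂μ := by
  obtain ⟨-, hθ1⟩ := hθ
  obtain ⟨hε0, -⟩ := hε
  have hint : ∀ σ : ℝ, 0 ≤ σ → IntegrableOn (fun x => min (f x) k ^ σ * f x ^ θ) Q₂ μ :=
    fun σ hσ => hfint.bdd_mul (c := k ^ σ) (by fun_prop) (ae_of_all _ fun x => by
      rw [Real.norm_of_nonneg (Real.rpow_nonneg (le_min (hf0 x) hk.le) σ)]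
      exact Real.rpow_le_rpow (le_min (hf0 x) hk.le) (min_le_right _ _) hσ)
  rw [show c * ε / (1 + ε - θ) = c * ε / (1 - θ + ε) by ring]
  exact setIntegral_rpow_add_mul_le_of_level_estimate (hf.min measurable_const)
    (hf.pow_const θ) hh (fun x => le_min (hf0 x) hk.le) (fun x => Real.rpow_nonneg (hf0 x) θ)
    hh0 (by linarith) hε0 (by linarith) hΛ₂.le ((hint _ (by linarith)).mono_set hsub)
    ((hint _ (by linarith)).mono_set hsub) (hint _ (by linarith)) hhint hyp

/-- Fubini/truncation step in the proof of the main higher integrability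
theorem: integrating the truncated level-set reverse estimate over the levels. -/
theorem fubini_truncation_step {X : Type*} [MeasurableSpace X]
    (μ : Measure X) (Q₁ Q₂ : Set X)
    (hQ₁ : MeasurableSet Q₁) (hQ₂ : MeasurableSet Q₂)
    (hsub : Q₁ ⊆ Q₂) (hfin : μ Q₂ < ⊤)
    (f h : X → ℝ) (hf : Measurable f) (hh : Measurable h)
    (hf0 : ∀ x, 0 ≤ f x) (hh0 : ∀ x, 0 ≤ h x)
    (θ ε c Λ₂ k : ℝ)
    (hθ : θ ∈ Set.Ioo (0:ℝ) 1) (hε : ε ∈ Set.Ioo (0:ℝ) 1)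
    (hc : 1 ≤ c) (hΛ₂ : 0 < Λ₂) (hk : 0 < k)
    (hfint : IntegrableOn (fun x => (f x) ^ θ) Q₂ μ)
    (hhint : IntegrableOn (fun x => (h x) ^ (1 + ε)) Q₂ μ)
    (hyp : ∀ Λ : ℝ, Λ₂ < Λ →
      ∫ x in Q₁ ∩ {x | Λ < min (f x) k}, (min (f x) k) ^ (1 - θ) * (f x) ^ θ ∂μ ≤
        c * Λ ^ (1 - θ) * ∫ x in Q₂ ∩ {x | Λ < min (f x) k}, (f x) ^ θ ∂μ +
          c * ∫ x in Q₂ ∩ {x | Λ < h x}, h x ∂μ) :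
    ∫ x in Q₁, (min (f x) k) ^ (1 - θ + ε) * (f x) ^ θ ∂μ ≤
      Λ₂ ^ ε * ∫ x in Q₁, (min (f x) k) ^ (1 - θ) * (f x) ^ θ ∂μ +
        (c * ε / (1 + ε - θ)) *
          ∫ x in Q₂, (min (f x) k) ^ (1 - θ + ε) * (f x) ^ θ ∂μ +
        c * ∫ x in Q₂, (h x) ^ (1 + ε) ∂μ :=
  fubini_truncation_step_general μ Q₁ Q₂ hsub f h hf hh hf0 hh0 θ ε c Λ₂ k hθ hε hc hΛ₂ hk hfint
    hhint hyp
end
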